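/- Let μ be a σ-finite measure half-invariant under a measurable T : X → X, let f ∈ L¹(X, μ) be non-negative, and let β > 0 and α < β. Set Y = {x ∈ X : liminf_n (1/n) Σ_{j=0}^{n-1} f(Tʲ(x)) < α < β < limsup_n (1/n) Σ_{j=0}^{n-1} f(Tʲ(x))}. Then every measurable subset C ⊆ Y with μ(C) < ∞ satisfies μ(C) ≤ (1/β) ∫ |f| dμ, and consequently μ(Y) ≤ (1/β) ∫ |f| dμ < ∞. -/

import Mathlib

/-!
Put `g = f - β • 1_C`. Garsia's proof of Hopf's maximal ergodic lemma only needs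
`∫ h ∘ T ≤ ∫ h` for integrable `h ≥ 0`, which is what half-invariance gives; it yields
`β μ(C ∩ {max_{k ≤ n} S_k g > 0}) ≤ ∫_{max_{k ≤ n} S_k g > 0} f ≤ ∫ |f|`.
If `x ∈ C` and some average `S_n f x / n` exceeds `β`, then `S_n g x ≥ S_n f x - β n > 0`,
because the orbit visits `C` at most `n` times. Letting `n → ∞` bounds the measure of all such
points of `C`, and every point of `Y` is one of them. σ-finiteness then passes from subsets of
finite measure to `Y` itself.
-/

open MeasureTheory Filter

section

variable {X : Type*} {T : X → X}

/-- `maxBirkhoffSum T g n = max 0 (birkhoffSum T g 1) … (birkhoffSum T g n)`, in Garsia's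
recursive form. -/
noncomputable def maxBirkhoffSum (T : X → X) (g : X → ℝ) : ℕ → X → ℝ
  | 0 => 0
  | n + 1 => fun x => max 0 (g x + maxBirkhoffSum T g n (T x))

variable {g : X → ℝ}

theorem maxBirkhoffSum_succ (n : ℕ) (x : X) :
    maxBirkhoffSum T g (n + 1) x = max 0 (g x + maxBirkhoffSum T g n (T x)) :=
  rfl

theorem maxBirkhoffSum_nonneg : ∀ n x, 0 ≤ maxBirkhoffSum T g n x
  | 0, _ => le_rfl
  | _ + 1, _ => le_max_left _ _

theorem maxBirkhoffSum_le_succ : ∀ n x, maxBirkhoffSum T g n x ≤ maxBirkhoffSum T g (n + 1) x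
  | 0, _ => maxBirkhoffSum_nonneg 1 _
  | n + 1, x => max_le_max le_rfl (add_le_add_right (maxBirkhoffSum_le_succ n (T x)) _)

theorem monotone_maxBirkhoffSum (x : X) : Monotone fun n => maxBirkhoffSum T g n x :=
  monotone_nat_of_le_succ fun n => maxBirkhoffSum_le_succ n x

theorem birkhoffSum_le_maxBirkhoffSum : ∀ n x, birkhoffSum T g n x ≤ maxBirkhoffSum T g n x
  | 0, _ => le_rfl
  | n + 1, x => by
    rw [birkhoffSum_succ', maxBirkhoffSum_succ]
    exact (add_le_add_right (birkhoffSum_le_maxBirkhoffSum n (T x)) _).trans (le_max_right _ _)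

theorem sub_comp_le_of_maxBirkhoffSum_pos {n : ℕ} {x : X} (hx : 0 < maxBirkhoffSum T g n x) :
    maxBirkhoffSum T g n x - maxBirkhoffSum T g n (T x) ≤ g x := by
  cases n with
  | zero => exact absurd hx (lt_irrefl 0)
  | succ n =>
    rw [maxBirkhoffSum_succ, max_eq_right (lt_max_iff.1 hx |>.resolve_left (lt_irrefl 0)).le]
    linarith [maxBirkhoffSum_le_succ (T := T) (g := g) n (T x)]

theorem birkhoffSum_indicator_one_le (C : Set X) (n : ℕ) (x : X) :
    birkhoffSum T (C.indicator (1 : X → ℝ)) n x ≤ n :=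
  calc birkhoffSum T (C.indicator (1 : X → ℝ)) n x ≤ ∑ _j ∈ Finset.range n, (1 : ℝ) :=
        Finset.sum_le_sum fun _ _ => Set.indicator_le_self' (fun _ _ => zero_le_one) _
    _ = n := by simp

theorem exists_birkhoffSum_gt_of_lt_limsup {f : X → ℝ} {β : ℝ} {x : X}
    (h : (β : EReal) <
      limsup (fun n : ℕ => ((birkhoffAverage ℝ T f n x : ℝ) : EReal)) atTop) :
    ∃ n : ℕ, β * n < birkhoffSum T f n x := by
  obtain ⟨n, hβn, hn⟩ :=
    ((frequently_lt_of_lt_limsup (by isBoundedDefault) h).and_eventually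
      (eventually_gt_atTop 0)).exists
  refine ⟨n, ?_⟩
  rw [mul_comm, ← lt_inv_mul_iff₀ (Nat.cast_pos.2 hn)]
  exact EReal.coe_lt_coe_iff.1 hβn

variable [MeasurableSpace X] {μ : Measure X}

theorem MeasureTheory.Integrable.comp_of_map_le (hT : Measurable T) (hμ : μ.map T ≤ μ)
    {h : X → ℝ} (hh : Integrable h μ) : Integrable (h ∘ T) μ :=
  (hh.mono_measure hμ).comp_measurable hT

theorem MeasureTheory.integral_comp_le_of_map_le (hT : Measurable T) (hμ : μ.map T ≤ μ)
    {h : X → ℝ} (hh : Integrable h μ) (h0 : 0 ≤ h) : ∫ x, h (T x) ∂μ ≤ ∫ x, h x ∂μ := by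
  rw [← integral_map hT.aemeasurable (hh.mono_measure hμ).aestronglyMeasurable]
  exact integral_mono_measure hμ (ae_of_all _ h0) hh

theorem Measurable.birkhoffSum (hg : Measurable g) (hT : Measurable T) (n : ℕ) :
    Measurable (birkhoffSum T g n) :=
  Finset.measurable_sum _ fun j _ => hg.comp (hT.iterate j)

theorem Measurable.maxBirkhoffSum (hg : Measurable g) (hT : Measurable T) :
    ∀ n, Measurable (maxBirkhoffSum T g n)
  | 0 => measurable_const
  | n + 1 => measurable_const.max (hg.add ((hg.maxBirkhoffSum hT n).comp hT))

theorem MeasureTheory.Integrable.maxBirkhoffSum (hT : Measurable T) (hμ : μ.map T ≤ μ)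
    (hg : Integrable g μ) : ∀ n, Integrable (maxBirkhoffSum T g n) μ
  | 0 => integrable_zero X ℝ μ
  | n + 1 =>
    (integrable_zero X ℝ μ).sup (hg.add ((hg.maxBirkhoffSum hT hμ n).comp_of_map_le hT hμ))

/-- Hopf's maximal ergodic lemma. -/
theorem setIntegral_maxBirkhoffSum_pos_nonneg (hT : Measurable T) (hμ : μ.map T ≤ μ)
    (hg : Measurable g) (hgi : Integrable g μ) (n : ℕ) :
    0 ≤ ∫ x in {x | 0 < maxBirkhoffSum T g n x}, g x ∂μ := by
  set M := maxBirkhoffSum T g n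
  set E := {x | 0 < M x}
  have hE : MeasurableSet E := measurableSet_lt measurable_const (hg.maxBirkhoffSum hT n)
  have hM : Integrable M μ := hgi.maxBirkhoffSum hT hμ n
  have hMT : Integrable (M ∘ T) μ := hM.comp_of_map_le hT hμ
  have hM_of_notMem : ∀ x ∉ E, M x = 0 := fun x hx =>
    le_antisymm (not_lt.1 hx) (maxBirkhoffSum_nonneg n x)
  calc 0 ≤ ∫ x, M x ∂μ - ∫ x, M (T x) ∂μ :=
        sub_nonneg.2 (integral_comp_le_of_map_le hT hμ hM (maxBirkhoffSum_nonneg n))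
    _ ≤ ∫ x in E, M x ∂μ - ∫ x in E, M (T x) ∂μ := by
        rw [setIntegral_eq_integral_of_forall_compl_eq_zero hM_of_notMem]
        exact sub_le_sub_left
          (setIntegral_le_integral hMT (ae_of_all _ fun x => maxBirkhoffSum_nonneg n (T x))) _
    _ = ∫ x in E, (M x - M (T x)) ∂μ := (integral_sub hM.integrableOn hMT.integrableOn).symm
    _ ≤ ∫ x in E, g x ∂μ :=
        setIntegral_mono_on (hM.sub hMT).integrableOn hgi.integrableOn hE
          fun x hx => sub_comp_le_of_maxBirkhoffSum_pos hx

theorem mul_measureReal_inter_setOf_maxBirkhoffSum_pos_le (hT : Measurable T)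
    (hμ : μ.map T ≤ μ) {f : X → ℝ} (hf : Measurable f) (hfi : Integrable f μ) {C : Set X}
    (hC : MeasurableSet C) (hCμ : μ C ≠ ⊤) (β : ℝ) (n : ℕ) :
    β * μ.real (C ∩ {x | 0 < maxBirkhoffSum T (f - β • C.indicator 1) n x}) ≤
      ∫ x, |f x| ∂μ := by
  set E := {x | 0 < maxBirkhoffSum T (f - β • C.indicator 1) n x}
  have hind : Integrable (C.indicator (1 : X → ℝ)) μ :=
    (integrable_indicator_iff hC).2 (integrableOn_const hCμ)
  have hg : Measurable (f - β • C.indicator 1) :=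
    hf.sub ((measurable_one.indicator hC).const_smul β)
  have hopf := setIntegral_maxBirkhoffSum_pos_nonneg hT hμ hg (hfi.sub (hind.smul β)) n
  have hsplit : ∫ x in E, (f - β • C.indicator 1 : X → ℝ) x ∂μ =
      ∫ x in E, f x ∂μ - β * μ.real (C ∩ E) := by
    rw [integral_sub' hfi.integrableOn (hind.smul β).integrableOn]
    simp only [Pi.smul_apply]
    rw [integral_smul, integral_indicator_one hC, measureReal_restrict_apply hC, smul_eq_mul]
  calc β * μ.real (C ∩ E) ≤ ∫ x in E, f x ∂μ := by linarith
    _ ≤ ∫ x in E, |f x| ∂μ := integral_mono hfi.integrableOn hfi.abs.integrableOn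
        fun x => le_abs_self (f x)
    _ ≤ ∫ x, |f x| ∂μ := setIntegral_le_integral hfi.abs (ae_of_all _ fun x => abs_nonneg _)

theorem measure_inter_setOf_birkhoffSum_gt_le (hT : Measurable T) (hμ : μ.map T ≤ μ)
    {f : X → ℝ} (hf : Measurable f) (hfi : Integrable f μ) {C : Set X} (hC : MeasurableSet C)
    (hCμ : μ C ≠ ⊤) {β : ℝ} (hβ : 0 < β) :
    μ (C ∩ {x | ∃ n : ℕ, β * n < birkhoffSum T f n x}) ≤
      ENNReal.ofReal (β⁻¹ * ∫ x, |f x| ∂μ) := by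
  set g := f - β • C.indicator (1 : X → ℝ)
  have hcover : C ∩ {x | ∃ n : ℕ, β * n < birkhoffSum T f n x} ⊆
      ⋃ n, C ∩ {x | 0 < maxBirkhoffSum T g n x} := by
    rintro x ⟨hxC, n, hn⟩
    have hsum : birkhoffSum T g n x =
        birkhoffSum T f n x - β * birkhoffSum T (C.indicator 1) n x := by
      simp [g, birkhoffSum, Finset.mul_sum, Finset.sum_sub_distrib]
    have hvisits := mul_le_mul_of_nonneg_left (birkhoffSum_indicator_one_le (T := T) C n x) hβ.le
    exact Set.mem_iUnion.2 ⟨n, hxC, (by linarith : 0 < birkhoffSum T g n x).trans_le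
      (birkhoffSum_le_maxBirkhoffSum n x)⟩
  have hmono : Monotone fun n => C ∩ {x | 0 < maxBirkhoffSum T g n x} := fun m n hmn =>
    Set.inter_subset_inter_right C fun x hx => hx.trans_le (monotone_maxBirkhoffSum x hmn)
  calc _ ≤ μ (⋃ n, C ∩ {x | 0 < maxBirkhoffSum T g n x}) := measure_mono hcover
    _ = ⨆ n, μ (C ∩ {x | 0 < maxBirkhoffSum T g n x}) := hmono.measure_iUnion
    _ ≤ _ := iSup_le fun n =>
        (ENNReal.le_ofReal_iff_toReal_le (measure_ne_top_of_subset Set.inter_subset_left hCμ)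
          (by positivity)).2 ((le_inv_mul_iff₀ hβ).2
            (mul_measureReal_inter_setOf_maxBirkhoffSum_pos_le hT hμ hf hfi hC hCμ β n))

theorem MeasureTheory.measure_le_of_forall_subset_lt_top [SigmaFinite μ] {s : Set X}
    (hs : MeasurableSet s) {r : ENNReal}
    (h : ∀ t, MeasurableSet t → t ⊆ s → μ t < ⊤ → μ t ≤ r) : μ s ≤ r :=
  not_lt.1 fun hr =>
    let ⟨t, ht, hts, hrt, htμ⟩ := Measure.exists_subset_measure_lt_top hs hr
    (h t ht hts htμ).not_gt hrt

end

theorem divergence_set_measure_bound_general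
    {X : Type*} [MeasurableSpace X] (μ : Measure X) [SigmaFinite μ]
    (T : X → X) (hT : Measurable T)
    (hhalf : ∀ B : Set X, MeasurableSet B → μ (T ⁻¹' B) ≤ μ B)
    (f : X → ℝ) (hf : Measurable f) (hfi : Integrable f μ)
    (α β : ℝ) (hβ : 0 < β)
    (Y : Set X)
    (hY : Y = {x : X |
      liminf (fun n : ℕ =>
          (((n : ℝ)⁻¹ * ∑ j ∈ Finset.range n, f (T^[j] x) : ℝ) : EReal)) atTop
        < (α : EReal) ∧
      (β : EReal) < limsup (fun n : ℕ =>
          (((n : ℝ)⁻¹ * ∑ j ∈ Finset.range n, f (T^[j] x) : ℝ) : EReal)) atTop}) :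
    (∀ C : Set X, MeasurableSet C → C ⊆ Y → μ C < ⊤ →
        μ C ≤ ENNReal.ofReal (β⁻¹ * ∫ x, |f x| ∂μ)) ∧
      μ Y ≤ ENNReal.ofReal (β⁻¹ * ∫ x, |f x| ∂μ) ∧ μ Y < ⊤ := by
  have hμ : μ.map T ≤ μ := Measure.le_iff.2 fun B hB => by
    rw [Measure.map_apply hT hB]
    exact hhalf B hB
  have havg (n : ℕ) : Measurable fun x => ((birkhoffAverage ℝ T f n x : ℝ) : EReal) :=
    measurable_coe_real_ereal.comp ((hf.birkhoffSum hT n).const_smul (n : ℝ)⁻¹)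
  have hYmeas : MeasurableSet Y := hY ▸
    (measurableSet_lt (.liminf havg) measurable_const).inter
      (measurableSet_lt measurable_const (.limsup havg))
  have hY_sub : Y ⊆ {x | ∃ n : ℕ, β * n < birkhoffSum T f n x} := fun x hx =>
    exists_birkhoffSum_gt_of_lt_limsup (hY ▸ hx).2
  have hbound (C : Set X) (hC : MeasurableSet C) (hCY : C ⊆ Y) (hCμ : μ C < ⊤) :
      μ C ≤ ENNReal.ofReal (β⁻¹ * ∫ x, |f x| ∂μ) := by
    rw [← Set.inter_eq_left.2 (hCY.trans hY_sub)]
    exact measure_inter_setOf_birkhoffSum_gt_le hT hμ hf hfi hC hCμ.ne hβ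
  have hYμ := measure_le_of_forall_subset_lt_top hYmeas hbound
  exact ⟨hbound, hYμ, hYμ.trans_lt ENNReal.ofReal_lt_top⟩

theorem divergence_set_measure_bound
    {X : Type*} [MeasurableSpace X] (μ : Measure X) [SigmaFinite μ]
    (T : X → X) (hT : Measurable T)
    (hhalf : ∀ B : Set X, MeasurableSet B → μ (T ⁻¹' B) ≤ μ B)
    (f : X → ℝ) (hf : Measurable f) (hfi : Integrable f μ) (hf0 : ∀ x, 0 ≤ f x)
    (α β : ℝ) (hβ : 0 < β) (hαβ : α < β)
    (Y : Set X)
    (hY : Y = {x : X |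
      liminf (fun n : ℕ =>
          (((n : ℝ)⁻¹ * ∑ j ∈ Finset.range n, f (T^[j] x) : ℝ) : EReal)) atTop
        < (α : EReal) ∧
      (β : EReal) < limsup (fun n : ℕ =>
          (((n : ℝ)⁻¹ * ∑ j ∈ Finset.range n, f (T^[j] x) : ℝ) : EReal)) atTop}) :
    (∀ C : Set X, MeasurableSet C → C ⊆ Y → μ C < ⊤ →
        μ C ≤ ENNReal.ofReal (β⁻¹ * ∫ x, |f x| ∂μ)) ∧
      μ Y ≤ ENNReal.ofReal (β⁻¹ * ∫ x, |f x| ∂μ) ∧ μ Y < ⊤ :=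
  divergence_set_measure_bound_general μ T hT hhalf f hf hfi α β hβ Y hY
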